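/- Let Y and W be pointed metric spaces and T : Y → W a base-point-preserving Lipschitz map. Then the linearization T̃ : F(Y) → F(W) is p-summing if and only if there is a constant K > 0 such that for all finite families (x_j^i), (y_j^i) in Y (1 ≤ j ≤ m₁, 1 ≤ i ≤ m₂) one has (Σ_{j=1}^{m₁} ‖Σ_{i=1}^{m₂} δ_W(T x_j^i) − δ_W(T y_j^i)‖^p)^{1/p} ≤ K sup_{s ∈ B_{Y^#}} (Σ_{j=1}^{m₁} |Σ_{i=1}^{m₂} s(x_j^i) − s(y_j^i)|^p)^{1/p}. -/

import Mathlib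

open scoped TensorProduct
open NormedSpace Finset

noncomputable section

/-- The strong `ℓ_p^m` norm of a finite family in a normed space. -/
def strongLp {E : Type*} [NormedAddCommGroup E] (p : ℝ) {m : ℕ} (x : Fin m → E) : ℝ :=
  (∑ j, ‖x j‖ ^ p) ^ (1 / p)

/-- The weak `ℓ_p^{m,w}` norm of a finite family in a normed space. -/
def weakLp {E : Type*} [NormedAddCommGroup E] [NormedSpace ℝ E] (p : ℝ) {m : ℕ}
    (x : Fin m → E) : ℝ :=
  sSup {r : ℝ | ∃ φ : StrongDual ℝ E, ‖φ‖ ≤ 1 ∧ r = (∑ j, |φ (x j)| ^ p) ^ (1 / p)}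

/-- A continuous linear operator is `p`-summing. -/
def IsPSumming {E F : Type*} [NormedAddCommGroup E] [NormedSpace ℝ E]
    [NormedAddCommGroup F] [NormedSpace ℝ F] (p : ℝ) (u : E →L[ℝ] F) : Prop :=
  ∃ K > 0, ∀ (m : ℕ) (x : Fin m → E),
    strongLp p (fun j => u (x j)) ≤ K * weakLp p x

/-- A continuous linear operator is (Cohen) strongly `p`-summing (`q` is the conjugate of `p`). -/
def IsStronglyPSumming {E F : Type*} [NormedAddCommGroup E] [NormedSpace ℝ E]
    [NormedAddCommGroup F] [NormedSpace ℝ F] (p q : ℝ) (u : E →L[ℝ] F) : Prop :=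
  ∃ K > 0, ∀ (m : ℕ) (x : Fin m → E) (φ : Fin m → StrongDual ℝ F),
    ∑ j, |φ j (u (x j))| ≤ K * strongLp p x * weakLp q φ

/-- A continuous linear operator is (Cohen) `p`-nuclear (`q` is the conjugate of `p`). -/
def IsPNuclear {E F : Type*} [NormedAddCommGroup E] [NormedSpace ℝ E]
    [NormedAddCommGroup F] [NormedSpace ℝ F] (p q : ℝ) (u : E →L[ℝ] F) : Prop :=
  ∃ K > 0, ∀ (m : ℕ) (x : Fin m → E) (φ : Fin m → StrongDual ℝ F),
    ∑ j, |φ j (u (x j))| ≤ K * weakLp p x * weakLp q φ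

/-- The Chevet–Saphar norm `d_p` on a tensor product (`q` is the conjugate of `p`):
infimum over all finite representations of `z`. -/
def dpNorm {E G : Type*} [NormedAddCommGroup E] [NormedSpace ℝ E]
    [NormedAddCommGroup G] [NormedSpace ℝ G] (p q : ℝ) (z : TensorProduct ℝ E G) : ℝ :=
  sInf {r : ℝ | ∃ (m : ℕ) (n : Fin m → E) (h : Fin m → G),
    z = ∑ j, n j ⊗ₜ[ℝ] h j ∧ r = weakLp p n * strongLp q h}

/-- The Chevet–Saphar norm `g_p` on a tensor product (`q` is the conjugate of `p`). -/
def gpNorm {E G : Type*} [NormedAddCommGroup E] [NormedSpace ℝ E]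
    [NormedAddCommGroup G] [NormedSpace ℝ G] (p q : ℝ) (z : TensorProduct ℝ E G) : ℝ :=
  sInf {r : ℝ | ∃ (m : ℕ) (n : Fin m → E) (h : Fin m → G),
    z = ∑ j, n j ⊗ₜ[ℝ] h j ∧ r = strongLp p n * weakLp q h}

/-- The tensor norm `w_p` (`q` is the conjugate of `p`). -/
def wpNorm {E G : Type*} [NormedAddCommGroup E] [NormedSpace ℝ E]
    [NormedAddCommGroup G] [NormedSpace ℝ G] (p q : ℝ) (z : TensorProduct ℝ E G) : ℝ :=
  sInf {r : ℝ | ∃ (m : ℕ) (n : Fin m → E) (h : Fin m → G),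
    z = ∑ j, n j ⊗ₜ[ℝ] h j ∧ r = weakLp p n * weakLp q h}

/-- `E`, together with the map `δ : Y → E`, is (isometrically) the Lipschitz-free space
of the pointed metric space `(Y, y₀)`: `δ` sends the base point to `0`, is an isometric
embedding, has dense linear span, and the norm of finite combinations of point evaluations
is computed against the unit ball of `Lip₀(Y)`. -/
structure IsFreeSpace (Y : Type*) [MetricSpace Y] (y₀ : Y)
    (E : Type*) [NormedAddCommGroup E] [NormedSpace ℝ E] [CompleteSpace E]
    (δ : Y → E) : Prop where
  map_base : δ y₀ = 0
  isometry : ∀ x y : Y, ‖δ x - δ y‖ = dist x y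
  dense_span : (Submodule.span ℝ (Set.range δ)).topologicalClosure = ⊤
  norm_eq : ∀ (n : ℕ) (a : Fin n → ℝ) (x : Fin n → Y),
    ‖∑ i, a i • δ (x i)‖ =
      sSup {r : ℝ | ∃ s : Y → ℝ, LipschitzWith 1 s ∧ s y₀ = 0 ∧ r = |∑ i, a i * s (x i)|}

end

noncomputable section

variable {Y W FY FW : Type*} [MetricSpace Y] [MetricSpace W]
  [NormedAddCommGroup FY] [NormedSpace ℝ FY] [NormedAddCommGroup FW] [NormedSpace ℝ FW]

/-- `T : Y → W` is MS-Lipschitz `p`-summing (`q` is the conjugate of `p`), the free spaces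
of `Y` and `W` being realized as `FY`, `FW` via `δY`, `δW`.  Elements of `W^# = F(W)^*` are
encoded as elements of `Dual ℝ FW`, and `d_p^L` is the Chevet–Saphar norm computed in
`F(Y) ⊗ W^#`. -/
def MSLipPSumming (p q : ℝ) (δY : Y → FY) (δW : W → FW) (T : Y → W) : Prop :=
  ∃ K > 0, ∀ (k : ℕ) (x y : Fin k → Y) (f : Fin k → StrongDual ℝ FW),
    |∑ l, (f l (δW (T (x l))) - f l (δW (T (y l))))| ≤
      K * dpNorm p q (∑ l, (δY (x l) - δY (y l)) ⊗ₜ[ℝ] f l)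

/-- `T : Y → W` is MS-strongly Lipschitz `p`-summing (`q` is the conjugate of `p`). -/
def MSStronglyLipPSumming (p q : ℝ) (δY : Y → FY) (δW : W → FW) (T : Y → W) : Prop :=
  ∃ K > 0, ∀ (k : ℕ) (x y : Fin k → Y) (f : Fin k → StrongDual ℝ FW),
    |∑ l, (f l (δW (T (x l))) - f l (δW (T (y l))))| ≤
      K * gpNorm p q (∑ l, (δY (x l) - δY (y l)) ⊗ₜ[ℝ] f l)

/-- `T : Y → W` is MS-Lipschitz `p`-nuclear (`q` is the conjugate of `p`). -/
def MSLipPNuclear (p q : ℝ) (δY : Y → FY) (δW : W → FW) (T : Y → W) : Prop :=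
  ∃ K > 0, ∀ (k : ℕ) (x y : Fin k → Y) (f : Fin k → StrongDual ℝ FW),
    |∑ l, (f l (δW (T (x l))) - f l (δW (T (y l))))| ≤
      K * wpNorm p q (∑ l, (δY (x l) - δY (y l)) ⊗ₜ[ℝ] f l)

end

/-!
By linearity the left-hand side is the strong `ℓ_p` norm of the images under `T̃` of the
families `v_j = ∑ᵢ (δ(x_j^i) - δ(y_j^i))`, and since the 1-Lipschitz functions vanishing at the
base point are exactly the restrictions to `δ(Y)` of the functionals of norm `≤ 1` on `F(Y)`
(Hahn–Banach on the span of `δ(Y)`), the supremum is the weak `ℓ_p` norm of `(v_j)`. So the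
inequality is the `p`-summing inequality for `T̃`, restricted to such families. Both sides of
that inequality are continuous and positively homogeneous in the family; as `δ` maps the base
point to `0`, the families `(v_j)` exhaust the tuples of integer combinations of point masses,
and every tuple in the span of `δ(Y)` is a limit of such tuples divided by `n`. Density of the
span then gives the inequality for all families.
-/

open Filter Topology Set

section LpNorms

variable {E : Type*} [NormedAddCommGroup E] {p : ℝ} {m : ℕ}

theorem strongLp_mono (hp : 0 ≤ p) {F : Type*} [NormedAddCommGroup F] {x : Fin m → E}
    {y : Fin m → F} (h : ∀ j, ‖x j‖ ≤ ‖y j‖) : strongLp p x ≤ strongLp p y := by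
  unfold strongLp
  refine Real.rpow_le_rpow (by positivity) (sum_le_sum fun j _ => ?_) (by positivity)
  exact Real.rpow_le_rpow (norm_nonneg _) (h j) hp

theorem strongLp_add_le (hp : 1 ≤ p) (x y : Fin m → E) :
    strongLp p (x + y) ≤ strongLp p x + strongLp p y := by
  calc strongLp p (x + y) ≤ strongLp p (fun j => ‖x j‖ + ‖y j‖) :=
        strongLp_mono (by linarith) fun j => (norm_add_le _ _).trans (le_abs_self _)
    _ ≤ strongLp p x + strongLp p y := by
        simpa only [strongLp, Real.norm_eq_abs, abs_norm] using
          Real.Lp_add_le univ (fun j => ‖x j‖) (fun j => ‖y j‖) hp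

theorem strongLp_smul [NormedSpace ℝ E] (hp : 0 < p) (c : ℝ) (x : Fin m → E) :
    strongLp p (c • x) = |c| * strongLp p x := by
  simp only [strongLp, Pi.smul_apply, norm_smul, Real.norm_eq_abs,
    Real.mul_rpow (abs_nonneg c) (norm_nonneg _), ← Finset.mul_sum]
  rw [Real.mul_rpow (by positivity) (by positivity), ← Real.rpow_mul (abs_nonneg c),
    mul_one_div_cancel hp.ne', Real.rpow_one]

theorem strongLp_le_mul_norm (hp : 0 < p) (x : Fin m → E) :
    strongLp p x ≤ (m : ℝ) ^ (1 / p) * ‖x‖ := by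
  calc strongLp p x ≤ strongLp p (fun _ : Fin m => ‖x‖) :=
        strongLp_mono hp.le fun j => (norm_le_pi_norm x j).trans (le_abs_self _)
    _ = (m : ℝ) ^ (1 / p) * ‖x‖ := by
        rw [strongLp, sum_const, card_univ, Fintype.card_fin, nsmul_eq_mul, norm_norm,
          Real.mul_rpow (by positivity) (by positivity), ← Real.rpow_mul (norm_nonneg _),
          mul_one_div_cancel hp.ne', Real.rpow_one]

theorem continuous_strongLp (hp : 0 < p) : Continuous (strongLp p : (Fin m → E) → ℝ) := by
  unfold strongLp
  fun_prop (disch := intros; positivity)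

end LpNorms

section WeakLp

variable {E : Type*} [NormedAddCommGroup E] [NormedSpace ℝ E] {p : ℝ} {m : ℕ}

theorem weakLp_eq_sSup_strongLp (x : Fin m → E) :
    weakLp p x =
      sSup {r | ∃ φ : StrongDual ℝ E, ‖φ‖ ≤ 1 ∧ r = strongLp p (fun j => φ (x j))} := by
  simp only [weakLp, strongLp, Real.norm_eq_abs]

theorem strongLp_apply_le_weakLp (hp : 0 ≤ p) (x : Fin m → E) {φ : StrongDual ℝ E}
    (hφ : ‖φ‖ ≤ 1) : strongLp p (fun j => φ (x j)) ≤ weakLp p x := by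
  rw [weakLp_eq_sSup_strongLp]
  refine le_csSup ⟨strongLp p x, ?_⟩ ⟨φ, hφ, rfl⟩
  rintro _ ⟨ψ, hψ, rfl⟩
  exact strongLp_mono hp fun _ => (ψ.le_of_opNorm_le hψ _).trans_eq (one_mul _)

theorem weakLp_le_of_forall (x : Fin m → E) {r : ℝ}
    (h : ∀ φ : StrongDual ℝ E, ‖φ‖ ≤ 1 → strongLp p (fun j => φ (x j)) ≤ r) :
    weakLp p x ≤ r := by
  rw [weakLp_eq_sSup_strongLp]
  exact csSup_le ⟨_, 0, by simp, rfl⟩ (by rintro _ ⟨φ, hφ, rfl⟩; exact h φ hφ)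

theorem weakLp_le_strongLp (hp : 0 ≤ p) (x : Fin m → E) : weakLp p x ≤ strongLp p x :=
  weakLp_le_of_forall x fun φ hφ =>
    strongLp_mono hp fun _ => (φ.le_of_opNorm_le hφ _).trans_eq (one_mul _)

theorem weakLp_add_le (hp : 1 ≤ p) (x y : Fin m → E) :
    weakLp p (x + y) ≤ weakLp p x + weakLp p y := by
  have hp0 : 0 ≤ p := by linarith
  refine weakLp_le_of_forall _ fun φ hφ => ?_
  simp only [Pi.add_apply, map_add]
  exact (strongLp_add_le hp (fun j => φ (x j)) (fun j => φ (y j))).trans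
    (add_le_add (strongLp_apply_le_weakLp hp0 x hφ) (strongLp_apply_le_weakLp hp0 y hφ))

theorem weakLp_smul (hp : 0 < p) (c : ℝ) (x : Fin m → E) :
    weakLp p (c • x) = |c| * weakLp p x := by
  have hscale (φ : StrongDual ℝ E) :
      strongLp p (fun j => φ ((c • x) j)) = |c| • strongLp p (fun j => φ (x j)) := by
    rw [smul_eq_mul, ← strongLp_smul hp]
    simp only [Pi.smul_apply, map_smul]
    rfl
  rw [weakLp_eq_sSup_strongLp, weakLp_eq_sSup_strongLp, ← smul_eq_mul,
    ← Real.sSup_smul_of_nonneg (abs_nonneg c)]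
  congr 1
  ext r
  simp only [Set.mem_smul_set, hscale]
  constructor
  · rintro ⟨φ, hφ, rfl⟩
    exact ⟨_, ⟨φ, hφ, rfl⟩, rfl⟩
  · rintro ⟨_, ⟨φ, hφ, rfl⟩, rfl⟩
    exact ⟨φ, hφ, rfl⟩

theorem continuous_weakLp (hp : 1 ≤ p) : Continuous (weakLp p : (Fin m → E) → ℝ) := by
  refine (LipschitzWith.of_le_add_mul' ((m : ℝ) ^ (1 / p)) fun x y => ?_).continuous
  calc weakLp p x = weakLp p (y + (x - y)) := by rw [add_sub_cancel]
    _ ≤ weakLp p y + strongLp p (x - y) := by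
        grw [weakLp_add_le hp, weakLp_le_strongLp (by linarith) (x - y)]
    _ ≤ weakLp p y + (m : ℝ) ^ (1 / p) * dist x y := by
        grw [strongLp_le_mul_norm (by linarith), dist_eq_norm]

end WeakLp

section DiffSums

variable {Y E : Type*} [AddCommGroup E] (δ : Y → E)

def diffSums (k : ℕ) : Set E :=
  {v | ∃ x y : Fin k → Y, ∑ i, (δ (x i) - δ (y i)) = v}

variable {δ}

theorem add_mem_diffSums {k l : ℕ} {v w : E} (hv : v ∈ diffSums δ k)
    (hw : w ∈ diffSums δ l) : v + w ∈ diffSums δ (k + l) := by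
  obtain ⟨x, y, rfl⟩ := hv
  obtain ⟨x', y', rfl⟩ := hw
  refine ⟨Fin.append x x', Fin.append y y', ?_⟩
  simp only [Fin.sum_univ_add, Fin.append_left, Fin.append_right]

theorem neg_mem_diffSums {k : ℕ} {v : E} (hv : v ∈ diffSums δ k) : -v ∈ diffSums δ k := by
  obtain ⟨x, y, rfl⟩ := hv
  exact ⟨y, x, by simp⟩

theorem zero_mem_diffSums (y₀ : Y) (k : ℕ) : (0 : E) ∈ diffSums δ k :=
  ⟨fun _ => y₀, fun _ => y₀, by simp⟩

theorem diffSums_mono [Nonempty Y] : Monotone (diffSums δ) :=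
  monotone_nat_of_le_succ fun k v hv => by
    simpa using add_mem_diffSums hv (zero_mem_diffSums (Classical.arbitrary Y) 1)

theorem exists_mem_diffSums_of_mem_closure {y₀ : Y} (hδ : δ y₀ = 0) {v : E}
    (hv : v ∈ AddSubgroup.closure (range δ)) : ∃ k, v ∈ diffSums δ k := by
  induction hv using AddSubgroup.closure_induction with
  | mem _ hx =>
    obtain ⟨y, rfl⟩ := hx
    exact ⟨1, fun _ => y, fun _ => y₀, by simp [hδ]⟩
  | zero => exact ⟨0, zero_mem_diffSums y₀ 0⟩
  | add _ _ _ _ hv hw =>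
    obtain ⟨k, hk⟩ := hv
    obtain ⟨l, hl⟩ := hw
    exact ⟨k + l, add_mem_diffSums hk hl⟩
  | neg _ _ hv =>
    obtain ⟨k, hk⟩ := hv
    exact ⟨k, neg_mem_diffSums hk⟩

theorem exists_eq_diffSums_of_forall_mem_closure {y₀ : Y} (hδ : δ y₀ = 0) {m : ℕ}
    {v : Fin m → E} (hv : ∀ j, v j ∈ AddSubgroup.closure (range δ)) :
    ∃ (k : ℕ) (x y : Fin m → Fin k → Y), v = fun j => ∑ i, (δ (x j i) - δ (y j i)) := by
  have : Nonempty Y := ⟨y₀⟩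
  choose k hk using fun j => exists_mem_diffSums_of_mem_closure hδ (hv j)
  choose x y hxy using fun j =>
    diffSums_mono (single_le_sum (fun j _ => Nat.zero_le (k j)) (mem_univ j)) (hk j)
  exact ⟨∑ j, k j, x, y, funext fun j => (hxy j).symm⟩

end DiffSums

theorem tendsto_intFloor_mul_div_natCast (r : ℝ) :
    Tendsto (fun n : ℕ => (⌊r * n⌋ : ℝ) / n) atTop (𝓝 r) := by
  have lower : Tendsto (fun n : ℕ => r - 1 / (n : ℝ)) atTop (𝓝 r) := by
    simpa using tendsto_const_nhds.sub (tendsto_one_div_atTop_nhds_zero_nat (𝕜 := ℝ))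
  refine tendsto_of_tendsto_of_tendsto_of_le_of_le' lower tendsto_const_nhds ?_ ?_
  · filter_upwards [eventually_gt_atTop 0] with n hn
    have hn' : (0 : ℝ) < n := by exact_mod_cast hn
    rw [le_div_iff₀ hn', sub_mul, one_div_mul_cancel hn'.ne']
    linarith [Int.lt_floor_add_one (r * n)]
  · filter_upwards [eventually_gt_atTop 0] with n hn
    rw [div_le_iff₀ (by exact_mod_cast hn)]
    exact Int.floor_le _

theorem exists_tendsto_inv_smul_of_mem_span {E : Type*} [AddCommGroup E] [Module ℝ E]
    [TopologicalSpace E] [IsTopologicalAddGroup E] [ContinuousSMul ℝ E] {s : Set E} {z : E}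
    (hz : z ∈ Submodule.span ℝ s) :
    ∃ g : ℕ → E, (∀ n, g n ∈ AddSubgroup.closure s) ∧
      Tendsto (fun n : ℕ => (n : ℝ)⁻¹ • g n) atTop (𝓝 z) := by
  -- stated for every multiple `r • z`, so that the induction passes through scalar multiplication
  suffices ∀ r : ℝ, ∃ g : ℕ → E, (∀ n, g n ∈ AddSubgroup.closure s) ∧
      Tendsto (fun n : ℕ => (n : ℝ)⁻¹ • g n) atTop (𝓝 (r • z)) by
    simpa using this 1
  induction hz using Submodule.span_induction with
  | mem x hx =>
    intro r
    refine ⟨fun n => ⌊r * n⌋ • x, fun n => zsmul_mem (AddSubgroup.subset_closure hx) _, ?_⟩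
    simp only [← Int.cast_smul_eq_zsmul ℝ, smul_smul, ← div_eq_inv_mul]
    exact (tendsto_intFloor_mul_div_natCast r).smul_const x
  | zero => exact fun r => ⟨0, fun _ => zero_mem _, by simpa using tendsto_const_nhds⟩
  | add x y _ _ hx hy =>
    intro r
    obtain ⟨g, hg, hgz⟩ := hx r
    obtain ⟨g', hg', hgz'⟩ := hy r
    exact ⟨g + g', fun n => add_mem (hg n) (hg' n), by simpa [smul_add] using hgz.add hgz'⟩
  | smul a x _ hx => exact fun r => by simpa [smul_smul] using hx (r * a)

section SummingInequality

variable {E F : Type*} [NormedAddCommGroup E] [NormedSpace ℝ E] [NormedAddCommGroup F]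
  [NormedSpace ℝ F] {p : ℝ}

def pSummingSet (p K : ℝ) (u : E →L[ℝ] F) (m : ℕ) : Set (Fin m → E) :=
  {v | strongLp p (fun j => u (v j)) ≤ K * weakLp p v}

theorem isClosed_pSummingSet (hp : 1 ≤ p) (K : ℝ) (u : E →L[ℝ] F) (m : ℕ) :
    IsClosed (pSummingSet p K u m) :=
  isClosed_le ((continuous_strongLp (by linarith)).comp (by fun_prop))
    (continuous_const.mul (continuous_weakLp hp))

theorem smul_mem_pSummingSet (hp : 0 < p) {K : ℝ} {u : E →L[ℝ] F} {m : ℕ} (c : ℝ)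
    {v : Fin m → E} (hv : v ∈ pSummingSet p K u m) : c • v ∈ pSummingSet p K u m := by
  have huv : (fun j => u ((c • v) j)) = c • fun j => u (v j) := by
    funext j
    simp
  simp only [pSummingSet, mem_ofPred_eq, huv, strongLp_smul hp, weakLp_smul hp,
    mul_left_comm K]
  exact mul_le_mul_of_nonneg_left hv (abs_nonneg c)

theorem pSummingSet_eq_univ_of_forall_diffSums {Y : Type*} {δ : Y → E} {y₀ : Y}
    (hδ : δ y₀ = 0) (hdense : Dense (Submodule.span ℝ (range δ) : Set E)) (hp : 1 ≤ p)
    (K : ℝ) (u : E →L[ℝ] F) (m : ℕ)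
    (h : ∀ (k : ℕ) (x y : Fin m → Fin k → Y),
      (fun j => ∑ i, (δ (x j i) - δ (y j i))) ∈ pSummingSet p K u m) :
    pSummingSet p K u m = univ := by
  have hclosure (v : Fin m → E) (hv : ∀ j, v j ∈ AddSubgroup.closure (range δ)) :
      v ∈ pSummingSet p K u m := by
    obtain ⟨k, x, y, rfl⟩ := exists_eq_diffSums_of_forall_mem_closure hδ hv
    exact h k x y
  have hspan : pi univ (fun _ => (Submodule.span ℝ (range δ) : Set E)) ⊆
      pSummingSet p K u m := by
    intro v hv
    choose g hg hgv using fun j => exists_tendsto_inv_smul_of_mem_span (hv j (mem_univ j))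
    refine (isClosed_pSummingSet hp K u m).mem_of_tendsto (tendsto_pi_nhds.2 hgv)
      (Eventually.of_forall fun n => ?_)
    exact smul_mem_pSummingSet (by linarith) _ (hclosure (fun j => g j n) fun j => hg j n)
  rw [← (isClosed_pSummingSet hp K u m).closure_subset_iff,
    (dense_pi univ fun _ _ => hdense).closure_eq] at hspan
  exact eq_univ_of_univ_subset hspan

end SummingInequality

theorem exists_dual_comp_eq_of_abs_le_norm {V E : Type*} [AddCommGroup V] [Module ℝ V]
    [NormedAddCommGroup E] [NormedSpace ℝ E] (G : V →ₗ[ℝ] E) (f : V →ₗ[ℝ] ℝ)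
    (h : ∀ c, |f c| ≤ ‖G c‖) : ∃ φ : StrongDual ℝ E, ‖φ‖ ≤ 1 ∧ ∀ c, φ (G c) = f c := by
  have hker : LinearMap.ker G ≤ LinearMap.ker f := fun c hc => by
    simpa [LinearMap.mem_ker.1 hc] using h c
  let f₀ : LinearMap.range G →ₗ[ℝ] ℝ :=
    (LinearMap.ker G).liftQ f hker ∘ₗ G.quotKerEquivRange.symm.toLinearMap
  have hf₀ (c : V) : f₀ ⟨G c, G.mem_range_self c⟩ = f c := by
    simp only [f₀, LinearMap.comp_apply, LinearEquiv.coe_coe]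
    rw [G.quotKerEquivRange_symm_apply_image]
    rfl
  have hbound (z : LinearMap.range G) : ‖f₀ z‖ ≤ 1 * ‖z‖ := by
    obtain ⟨_, c, rfl⟩ := z
    simpa [hf₀] using h c
  obtain ⟨φ, hφ, hnorm⟩ :=
    exists_extension_norm_eq (LinearMap.range G) (f₀.mkContinuous 1 hbound)
  exact ⟨φ, hnorm ▸ f₀.mkContinuous_norm_le zero_le_one hbound,
    fun c => (hφ ⟨G c, G.mem_range_self c⟩).trans (hf₀ c)⟩

namespace IsFreeSpace

variable {Y E : Type*} [MetricSpace Y] {y₀ : Y} [NormedAddCommGroup E] [NormedSpace ℝ E]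
  [CompleteSpace E] {δ : Y → E}

theorem abs_sum_mul_le_norm (hF : IsFreeSpace Y y₀ E δ) {s : Y → ℝ} (hs : LipschitzWith 1 s)
    (hs0 : s y₀ = 0) {ι : Type*} [Fintype ι] (a : ι → ℝ) (x : ι → Y) :
    |∑ i, a i * s (x i)| ≤ ‖∑ i, a i • δ (x i)‖ := by
  let e := (Fintype.equivFin ι).symm
  rw [← e.sum_comp, ← e.sum_comp, hF.norm_eq]
  refine le_csSup ⟨∑ i, |a (e i)| * dist (x (e i)) y₀, ?_⟩ ⟨s, hs, hs0, rfl⟩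
  rintro _ ⟨t, ht, ht0, rfl⟩
  refine (abs_sum_le_sum_abs _ _).trans (sum_le_sum fun i _ => ?_)
  rw [abs_mul]
  gcongr
  simpa [ht0, Real.dist_eq] using ht.dist_le_mul (x (e i)) y₀

theorem exists_dual_extension (hF : IsFreeSpace Y y₀ E δ) {s : Y → ℝ} (hs : LipschitzWith 1 s)
    (hs0 : s y₀ = 0) : ∃ φ : StrongDual ℝ E, ‖φ‖ ≤ 1 ∧ ∀ y, φ (δ y) = s y := by
  obtain ⟨φ, hφ, hφs⟩ := exists_dual_comp_eq_of_abs_le_norm (Finsupp.linearCombination ℝ δ)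
    (Finsupp.linearCombination ℝ s) fun c => by
      simp only [Finsupp.linearCombination_apply, Finsupp.sum, ← sum_coe_sort c.support,
        smul_eq_mul]
      exact hF.abs_sum_mul_le_norm hs hs0 _ _
  exact ⟨φ, hφ, fun y => by simpa using hφs (Finsupp.single y 1)⟩

theorem lipschitzWith_dual_comp (hF : IsFreeSpace Y y₀ E δ) {φ : StrongDual ℝ E}
    (hφ : ‖φ‖ ≤ 1) : LipschitzWith 1 (fun y => φ (δ y)) :=
  LipschitzWith.of_dist_le_mul fun a b => by
    rw [Real.dist_eq, ← map_sub, NNReal.coe_one, one_mul, ← hF.isometry a b]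
    exact (φ.le_of_opNorm_le hφ _).trans_eq (one_mul _)

theorem weakLp_diffs_eq_sSup (hF : IsFreeSpace Y y₀ E δ) (p : ℝ) {m k : ℕ}
    (x y : Fin m → Fin k → Y) :
    weakLp p (fun j => ∑ i, (δ (x j i) - δ (y j i))) =
      sSup {r : ℝ | ∃ s : Y → ℝ, LipschitzWith 1 s ∧ s y₀ = 0 ∧
        r = (∑ j, |∑ i, (s (x j i) - s (y j i))| ^ p) ^ (1 / p)} := by
  simp only [weakLp, map_sum, map_sub]
  congr 1
  ext r
  constructor
  · rintro ⟨φ, hφ, rfl⟩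
    exact ⟨fun y => φ (δ y), hF.lipschitzWith_dual_comp hφ, by simp [hF.map_base], rfl⟩
  · rintro ⟨s, hs, hs0, rfl⟩
    obtain ⟨φ, hφ, hφs⟩ := hF.exists_dual_extension hs hs0
    exact ⟨φ, hφ, by simp only [hφs]⟩

end IsFreeSpace

theorem linearization_pSumming_iff_summing_inequality_general
    {Y W FY FW : Type*} [MetricSpace Y] [Inhabited Y]
    [NormedAddCommGroup FY] [NormedSpace ℝ FY] [CompleteSpace FY]
    [NormedAddCommGroup FW] [NormedSpace ℝ FW]
    {δY : Y → FY} {δW : W → FW}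
    (hFY : IsFreeSpace Y default FY δY)
    {p : ℝ} (hp : 1 ≤ p)
    (T : Y → W)
    (Tt : FY →L[ℝ] FW) (hTt : ∀ x, Tt (δY x) = δW (T x)) :
    IsPSumming p Tt ↔
      ∃ K > 0, ∀ (m₁ m₂ : ℕ) (x y : Fin m₁ → Fin m₂ → Y),
        (∑ j, ‖∑ i, (δW (T (x j i)) - δW (T (y j i)))‖ ^ p) ^ (1 / p) ≤
          K * sSup {r : ℝ | ∃ s : Y → ℝ, LipschitzWith 1 s ∧ s default = 0 ∧
            r = (∑ j, |∑ i, (s (x j i) - s (y j i))| ^ p) ^ (1 / p)} := by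
  have hdiffs (K : ℝ) (m₁ m₂ : ℕ) (x y : Fin m₁ → Fin m₂ → Y) :
      (fun j => ∑ i, (δY (x j i) - δY (y j i))) ∈ pSummingSet p K Tt m₁ ↔
        (∑ j, ‖∑ i, (δW (T (x j i)) - δW (T (y j i)))‖ ^ p) ^ (1 / p) ≤
          K * sSup {r : ℝ | ∃ s : Y → ℝ, LipschitzWith 1 s ∧ s default = 0 ∧
            r = (∑ j, |∑ i, (s (x j i) - s (y j i))| ^ p) ^ (1 / p)} := by
    simp only [pSummingSet, mem_ofPred_eq, strongLp, map_sum, map_sub, hTt,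
      hFY.weakLp_diffs_eq_sSup]
  have hdense : Dense (Submodule.span ℝ (range δY) : Set FY) :=
    Submodule.dense_iff_topologicalClosure_eq_top.2 hFY.dense_span
  simp only [← hdiffs]
  refine exists_congr fun K => and_congr_right fun _ =>
    ⟨fun h m₁ m₂ x y => h m₁ _, fun h m v => ?_⟩
  change v ∈ pSummingSet p K Tt m
  rw [pSummingSet_eq_univ_of_forall_diffSums hFY.map_base hdense hp K Tt m (h m)]
  exact mem_univ v

/-- Theorem 2.5, (2) ⇔ (4): `T̃` is `p`-summing iff inequality (2.5) holds. -/
theorem linearization_pSumming_iff_summing_inequality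
    {Y W FY FW : Type*} [MetricSpace Y] [Inhabited Y] [MetricSpace W] [Inhabited W]
    [NormedAddCommGroup FY] [NormedSpace ℝ FY] [CompleteSpace FY]
    [NormedAddCommGroup FW] [NormedSpace ℝ FW] [CompleteSpace FW]
    {δY : Y → FY} {δW : W → FW}
    (hFY : IsFreeSpace Y default FY δY) (hFW : IsFreeSpace W default FW δW)
    {p : ℝ} (hp : 1 ≤ p)
    (T : Y → W) (hTlip : ∃ K, LipschitzWith K T) (hT0 : T default = default)
    (Tt : FY →L[ℝ] FW) (hTt : ∀ x, Tt (δY x) = δW (T x)) :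
    IsPSumming p Tt ↔
      ∃ K > 0, ∀ (m₁ m₂ : ℕ) (x y : Fin m₁ → Fin m₂ → Y),
        (∑ j, ‖∑ i, (δW (T (x j i)) - δW (T (y j i)))‖ ^ p) ^ (1 / p) ≤
          K * sSup {r : ℝ | ∃ s : Y → ℝ, LipschitzWith 1 s ∧ s default = 0 ∧
            r = (∑ j, |∑ i, (s (x j i) - s (y j i))| ^ p) ^ (1 / p)} :=
  linearization_pSumming_iff_summing_inequality_general hFY hp T Tt hTt
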